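/- arXiv:2303.01085 — 8 statements merged into one kernel-verified Lean document; each statement's English description precedes it below -/
import Mathlib

section
/- For every integer k ≥ 1 and positive integers m and m_1,…,m_k with m_i ≥ 2^{i-1}·m + 1 for all 1 ≤ i ≤ k, the polynomial e_k^m = (∏_{(α_1,…,α_k) ∈ F_2^k \ {0}} (α_1 x_1 + ⋯ + α_k x_k))^m does not belong to the ideal (x_1^{m_1}, …, x_k^{m_k}) in F_2[x_1,…,x_k]. -/
open MvPolynomial

/-- The top Dickson polynomial `e_k = ∏_{0 ≠ α ∈ F_2^k} (α_1 x_1 + ⋯ + α_k x_k)`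
in `F_2[x_1,…,x_k]`. -/
noncomputable def ek (k : ℕ) : MvPolynomial (Fin k) (ZMod 2) :=
  ∏ α ∈ Finset.univ.filter (fun α : Fin k → ZMod 2 => α ≠ 0),
    ∑ i, C (α i) * X i

lemma ek_zero : ek 0 = 1 := by
  unfold ek
  rw [Finset.prod_eq_one]
  intro α hα
  simp only [Finset.mem_filter] at hα
  exact absurd (Subsingleton.elim α 0) hα.2

lemma phi_C {n : ℕ} (r : ZMod 2) :
    finSuccEquiv (ZMod 2) n (C r) = Polynomial.C (C r) := by
  simp [finSuccEquiv_apply]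

lemma phi_linear {n : ℕ} (α : Fin (n+1) → ZMod 2) :
    finSuccEquiv (ZMod 2) n (∑ i, C (α i) * X i) =
      Polynomial.C (C (α 0)) * Polynomial.X + Polynomial.C (∑ i, C (α i.succ) * X i) := by
  rw [Fin.sum_univ_succ, map_add, map_sum, map_mul, phi_C, finSuccEquiv_X_zero]
  congr 1
  rw [map_sum]
  congr 1
  funext i
  rw [map_mul, phi_C, finSuccEquiv_X_succ, ← Polynomial.C_mul]

lemma zmod2_cases (a : ZMod 2) (h : ¬ a = 1) : a = 0 := by revert h; revert a; decide

lemma ek_succ_decomp (n : ℕ) :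
    ∃ P : Polynomial (MvPolynomial (Fin n) (ZMod 2)),
      P.Monic ∧ P.natDegree = 2 ^ n ∧
      finSuccEquiv (ZMod 2) n (ek (n + 1)) = P * Polynomial.C (ek n) := by
  classical
  refine ⟨∏ β : Fin n → ZMod 2, (Polynomial.X + Polynomial.C (∑ i, C (β i) * X i)), ?_, ?_, ?_⟩
  · exact Polynomial.monic_prod_of_monic _ _ fun β _ => Polynomial.monic_X_add_C _
  · rw [Polynomial.natDegree_prod_of_monic _ _ fun β _ => Polynomial.monic_X_add_C _,
      Finset.sum_congr rfl fun β _ => Polynomial.natDegree_X_add_C _]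
    simp
  · unfold ek
    rw [map_prod]
    rw [← Finset.prod_filter_mul_prod_filter_not
      (Finset.univ.filter (fun α : Fin (n+1) → ZMod 2 => α ≠ 0)) (fun α => α 0 = 1)]
    congr 1
    · refine Finset.prod_bij' (fun α _ => Fin.tail α) (fun β _ => Fin.cons 1 β) ?_ ?_ ?_ ?_ ?_
      · intro a ha; exact Finset.mem_univ _
      · intro β hβ
        simp only [Finset.mem_filter, Finset.mem_univ, true_and, Fin.cons_zero, and_true]
        intro h0
        have := congrFun h0 0
        simp at this
      · intro α hα
        simp only [Finset.mem_filter, Finset.mem_univ, true_and] at hα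
        have hc := Fin.cons_self_tail α
        rw [hα.2] at hc
        exact hc
      · intro β hβ
        funext j
        simp [Fin.tail]
      · intro α hα
        simp only [Finset.mem_filter, Finset.mem_univ, true_and] at hα
        rw [phi_linear, hα.2]
        simp [Fin.tail]
    · have h2 : ∀ α ∈ (Finset.univ.filter
          (fun α : Fin (n+1) → ZMod 2 => α ≠ 0)).filter (fun α => ¬ α 0 = 1),
          finSuccEquiv (ZMod 2) n (∑ i, C (α i) * X i)
            = Polynomial.C (∑ i, C (Fin.tail α i) * X i) := by
        intro α hα
        simp only [Finset.mem_filter, Finset.mem_univ, true_and] at hα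
        have h00 : α 0 = 0 := zmod2_cases _ hα.2
        rw [phi_linear, h00]
        simp [Fin.tail]
      rw [Finset.prod_congr rfl h2,
        ← map_prod (Polynomial.C : MvPolynomial (Fin n) (ZMod 2) →+* _)]
      congr 1
      refine Finset.prod_bij' (fun α _ => Fin.tail α) (fun β _ => Fin.cons 0 β) ?_ ?_ ?_ ?_ ?_
      · intro α hα
        simp only [Finset.mem_filter, Finset.mem_univ, true_and] at hα ⊢
        intro h0
        apply hα.1
        have h00 : α 0 = 0 := zmod2_cases _ hα.2
        have hc : α = Fin.cons (α 0) (Fin.tail α) := (Fin.cons_self_tail α).symm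
        rw [hc, h00, h0]
        funext i
        exact Fin.cases rfl (fun j => rfl) i
      · intro β hβ
        simp only [Finset.mem_filter, Finset.mem_univ, true_and] at hβ ⊢
        constructor
        · intro h0
          apply hβ
          funext j
          have := congrFun h0 j.succ
          simpa using this
        · simp
      · intro α hα
        simp only [Finset.mem_filter, Finset.mem_univ, true_and] at hα
        have h00 : α 0 = 0 := zmod2_cases _ hα.2
        have hc := Fin.cons_self_tail α
        rw [h00] at hc
        exact hc
      · intro β hβ
        funext j
        simp [Fin.tail]
      · intro α hα
        rfl

lemma coeff_top (n m : ℕ) :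
    ((finSuccEquiv (ZMod 2) n) (ek (n+1) ^ m)).coeff (m * 2 ^ n) = ek n ^ m := by
  obtain ⟨P, hmon, hdeg, hPC⟩ := ek_succ_decomp n
  rw [map_pow, hPC, mul_pow, ← map_pow, Polynomial.coeff_mul_C]
  have hm2 : (P ^ m).Monic := hmon.pow m
  have hdd : (P ^ m).natDegree = m * 2 ^ n := by
    rw [Polynomial.natDegree_pow, hdeg]
  rw [← hdd, hm2.coeff_natDegree, one_mul]

lemma aux (m : ℕ) : ∀ (n : ℕ) (w : Fin n → ℕ),
    (∀ i : Fin n, 2 ^ (n - 1 - (i : ℕ)) * m + 1 ≤ w i) →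
    ek n ^ m ∉ Ideal.span (Set.range fun i : Fin n => X i ^ w i) := by
  intro n
  induction n with
  | zero =>
    intro w hw h
    have hsp : Ideal.span (Set.range fun i : Fin 0 => (X i ^ w i : MvPolynomial (Fin 0) (ZMod 2))) = ⊥ := by
      rw [Set.range_eq_empty, Ideal.span_empty]
    rw [ek_zero, one_pow, hsp, Ideal.mem_bot] at h
    exact one_ne_zero h
  | succ n ih =>
    intro w hw h
    rw [Ideal.mem_span_range_iff_exists_fun] at h
    obtain ⟨c, hc⟩ := h
    set d := m * 2 ^ n with hd
    have key := congrArg (fun p => (finSuccEquiv (ZMod 2) n p).coeff d) hc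
    simp only [map_sum, map_mul, map_pow] at key
    rw [Polynomial.finset_sum_coeff, Fin.sum_univ_succ] at key
    rw [finSuccEquiv_X_zero] at key
    have h0 : (finSuccEquiv (ZMod 2) n (c 0) * Polynomial.X ^ w 0).coeff d = 0 := by
      rw [Polynomial.coeff_mul_X_pow']
      have hw0 := hw 0
      have he : n + 1 - 1 - ((0 : Fin (n+1)) : ℕ) = n := by simp
      rw [he] at hw0
      have : ¬ w 0 ≤ d := by rw [hd, mul_comm]; omega
      simp [this]
    rw [h0, zero_add] at key
    have hsucc : ∀ j : Fin n,
        (finSuccEquiv (ZMod 2) n (c j.succ) * Polynomial.C (X j) ^ w j.succ).coeff d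
          = (finSuccEquiv (ZMod 2) n (c j.succ)).coeff d * (X j ^ w j.succ) := by
      intro j
      rw [← Polynomial.C_pow, Polynomial.coeff_mul_C]
    have hct : (((finSuccEquiv (ZMod 2) n) (ek (n+1))) ^ m).coeff d = ek n ^ m := by
      rw [← map_pow, hd]; exact coeff_top n m
    simp only [finSuccEquiv_X_succ, hsucc] at key
    rw [hct] at key
    refine ih (fun j => w j.succ) ?_ ?_
    · intro j
      have := hw j.succ
      have he : n + 1 - 1 - ((j.succ : Fin (n+1)) : ℕ) = n - 1 - (j : ℕ) := by
        simp [Fin.val_succ]; omega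
      rwa [he] at this
    · rw [Ideal.mem_span_range_iff_exists_fun]
      exact ⟨fun j => (finSuccEquiv (ZMod 2) n (c j.succ)).coeff d, by simpa using key⟩

lemma ek_rename (k : ℕ) (σ : Equiv.Perm (Fin k)) : rename σ (ek k) = ek k := by
  unfold ek
  rw [map_prod]
  have h1 : ∀ α : Fin k → ZMod 2, rename σ (∑ i, C (α i) * X i)
      = ∑ i, C (α (σ.symm i)) * X i := by
    intro α
    rw [map_sum]
    simp only [map_mul, rename_C, rename_X]
    exact Fintype.sum_equiv σ _ _ (fun i => by simp)
  rw [Finset.prod_congr rfl fun α _ => h1 α]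
  refine Finset.prod_bij' (fun α _ => α ∘ σ.symm) (fun β _ => β ∘ σ) ?_ ?_ ?_ ?_ ?_
  · intro α hα
    simp only [Finset.mem_filter, Finset.mem_univ, true_and] at hα ⊢
    intro h0
    apply hα
    funext i
    have := congrFun h0 (σ i)
    simpa using this
  · intro β hβ
    simp only [Finset.mem_filter, Finset.mem_univ, true_and] at hβ ⊢
    intro h0
    apply hβ
    funext i
    have := congrFun h0 (σ.symm i)
    simpa using this
  · intro α _; funext i; simp
  · intro β _; funext i; simp
  · intro α _; rfl

theorem stmt0 (k : ℕ) (hk : 1 ≤ k) (m : ℕ) (hm : 0 < m)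
    (mv : Fin k → ℕ) (hmvpos : ∀ i, 0 < mv i)
    (hmv : ∀ i : Fin k, 2 ^ (i : ℕ) * m + 1 ≤ mv i) :
    ek k ^ m ∉ Ideal.span (Set.range fun i : Fin k => X i ^ mv i) := by
  intro h
  set ψ := renameEquiv (ZMod 2) (Fin.revPerm : Equiv.Perm (Fin k)) with hψ
  have h2 : ψ (ek k ^ m) ∈ Ideal.map (ψ : MvPolynomial (Fin k) (ZMod 2) →+* _)
      (Ideal.span (Set.range fun i : Fin k => X i ^ mv i)) :=
    Ideal.mem_map_of_mem _ h
  rw [Ideal.map_span] at h2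
  have himg : (ψ : MvPolynomial (Fin k) (ZMod 2) →+* _) ''
      (Set.range fun i : Fin k => X i ^ mv i)
      = Set.range fun i : Fin k => (X i ^ mv (Fin.rev i) : MvPolynomial (Fin k) (ZMod 2)) := by
    rw [← Set.range_comp]
    have hc : ((ψ : MvPolynomial (Fin k) (ZMod 2) →+* _) ∘ fun i : Fin k => X i ^ mv i)
        = (fun i : Fin k => (X i ^ mv (Fin.rev i) : MvPolynomial (Fin k) (ZMod 2))) ∘ Fin.rev := by
      funext i
      simp [hψ, Fin.rev_rev]
    rw [hc]
    exact Function.Surjective.range_comp Fin.rev_surjective _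
  have hek : ψ (ek k ^ m) = ek k ^ m := by
    rw [map_pow]
    simp only [hψ, renameEquiv_apply]
    rw [ek_rename]
  rw [himg, hek] at h2
  refine aux m k (fun i => mv (Fin.rev i)) ?_ h2
  intro i
  have hv : ((Fin.rev i : Fin k) : ℕ) = k - 1 - (i : ℕ) := by
    rw [Fin.val_rev]
    omega
  have := hmv (Fin.rev i)
  rwa [hv] at this
end

section
/- For every integer k ≥ 1 and every positive integer m, the maximal integer j such that e_k^j ∉ (x_1^{m+1}, x_2^{2m+1}, x_3^{2^2 m+1}, …, x_k^{2^{k-1} m+1}) in F_2[x_1,…,x_k] equals m; that is, e_k^m is not in this ideal but e_k^{m+1} is. -/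
open MvPolynomial

section aux
open Finset

variable {k : ℕ}

/-- weight of an exponent vector -/
def Wt {k : ℕ} (ν : Fin k →₀ ℕ) : ℕ := ∑ i, ν i * 2 ^ (i : ℕ)

lemma Wt_add (a b : Fin k →₀ ℕ) : Wt (a + b) = Wt a + Wt b := by
  simp [Wt, add_mul, Finset.sum_add_distrib]

lemma Wt_single (i : Fin k) (n : ℕ) : Wt (Finsupp.single i n) = n * 2 ^ (i : ℕ) := by
  rw [Wt, Finset.sum_eq_single i] <;> simp +contextual [Finsupp.single_apply, eq_comm]


/-- the linear form attached to `α` -/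
noncomputable def LF {k : ℕ} (α : Fin k → ZMod 2) : MvPolynomial (Fin k) (ZMod 2) :=
  ∑ i, C (α i) * X i

lemma zmod2_ne_zero : ∀ a : ZMod 2, a ≠ 0 → a = 1 := by decide

lemma step (P : MvPolynomial (Fin k) (ZMod 2)) (μ : Fin k →₀ ℕ)
    (h1 : coeff μ P = 1) (h2 : ∀ ν, coeff ν P ≠ 0 → Wt ν ≤ Wt μ)
    (α : Fin k → ZMod 2) (t : Fin k) (ht : α t ≠ 0) (htop : ∀ j, α j ≠ 0 → j ≤ t) :
    coeff (μ + Finsupp.single t 1) (P * LF α) = 1 ∧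
      ∀ ν, coeff ν (P * LF α) ≠ 0 → Wt ν ≤ Wt (μ + Finsupp.single t 1) := by
  classical
  have hw : Wt (μ + Finsupp.single t 1) = Wt μ + 2 ^ (t : ℕ) := by
    rw [Wt_add, Wt_single, one_mul]
  have key : ∀ ν : Fin k →₀ ℕ, coeff ν (P * LF α)
      = ∑ i, α i * (if i ∈ ν.support then coeff (ν - Finsupp.single i 1) P else 0) := by
    intro ν
    rw [LF, Finset.mul_sum, coeff_sum]
    refine Finset.sum_congr rfl fun i _ => ?_
    rw [mul_left_comm, coeff_C_mul, coeff_mul_X']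
  have hWsub : ∀ (ν : Fin k →₀ ℕ) (i : Fin k), i ∈ ν.support →
      Wt (ν - Finsupp.single i 1) + 2 ^ (i : ℕ) = Wt ν := by
    intro ν i hi
    have hle : Finsupp.single i 1 ≤ ν := by
      rw [Finsupp.single_le_iff]
      simpa [Finsupp.mem_support_iff, Nat.one_le_iff_ne_zero] using hi
    rw [← one_mul (2 ^ (i : ℕ)), ← Wt_single i 1, ← Wt_add, tsub_add_cancel_of_le hle]
  constructor
  · rw [key, Finset.sum_eq_single t]
    · have htmem : t ∈ (μ + Finsupp.single t 1).support := by
        simp [Finsupp.mem_support_iff]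
      rw [if_pos htmem, add_tsub_cancel_right, h1, zmod2_ne_zero _ ht, mul_one]
    · intro i _ hit
      rcases eq_or_ne (α i) 0 with h0 | h0
      · simp [h0]
      · have hilt : (i : ℕ) < (t : ℕ) := by
          have : (i:ℕ) ≤ (t:ℕ) := by exact_mod_cast htop i h0
          have hne : (i:ℕ) ≠ (t:ℕ) := fun h => hit (Fin.ext h)
          omega
        split_ifs with hmem
        · have heq := hWsub _ i hmem
          rw [hw] at heq
          have hgt : Wt μ < Wt ((μ + Finsupp.single t 1) - Finsupp.single i 1) := by
            have h2i : 2 ^ (i : ℕ) < 2 ^ (t : ℕ) := Nat.pow_lt_pow_right one_lt_two hilt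
            omega
          have : coeff ((μ + Finsupp.single t 1) - Finsupp.single i 1) P = 0 := by
            by_contra hc
            exact absurd (h2 _ hc) (not_le.mpr hgt)
          rw [this, mul_zero]
        · rw [mul_zero]
    · intro h; exact absurd (Finset.mem_univ t) h
  · intro ν hν
    rw [key] at hν
    obtain ⟨i, -, hi⟩ := Finset.exists_ne_zero_of_sum_ne_zero hν
    have h0 : α i ≠ 0 := by rintro h; simp [h] at hi
    have hmem : i ∈ ν.support := by
      by_contra h; rw [if_neg h, mul_zero] at hi; exact hi rfl
    have hc : coeff (ν - Finsupp.single i 1) P ≠ 0 := by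
      rw [if_pos hmem] at hi
      intro h; rw [h, mul_zero] at hi; exact hi rfl
    have := h2 _ hc
    have heq := hWsub ν i hmem
    have h2i : 2 ^ (i : ℕ) ≤ 2 ^ (t : ℕ) :=
      Nat.pow_le_pow_right (by norm_num) (by exact_mod_cast htop i h0)
    rw [hw]; omega

/-- top index of a nonzero vector -/
noncomputable def topIdx {k : ℕ} [NeZero k] (α : Fin k → ZMod 2) : Fin k :=
  if h : (Finset.univ.filter fun i => α i ≠ 0).Nonempty then
    (Finset.univ.filter fun i => α i ≠ 0).max' h else 0

lemma filter_nonempty_of_ne {α : Fin k → ZMod 2} (h : α ≠ 0) :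
    (Finset.univ.filter fun i => α i ≠ 0).Nonempty := by
  obtain ⟨i, hi⟩ := Function.ne_iff.mp h
  exact ⟨i, Finset.mem_filter.mpr ⟨Finset.mem_univ i, hi⟩⟩

lemma topIdx_ne_zero [NeZero k] {α : Fin k → ZMod 2} (h : α ≠ 0) : α (topIdx α) ≠ 0 := by
  rw [topIdx, dif_pos (filter_nonempty_of_ne h)]
  exact (Finset.mem_filter.mp (Finset.max'_mem (Finset.univ.filter fun i => α i ≠ 0) (filter_nonempty_of_ne h))).2

lemma topIdx_le [NeZero k] {α : Fin k → ZMod 2} {j : Fin k} (hj : α j ≠ 0) :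
    j ≤ topIdx α := by
  have h : α ≠ 0 := fun h0 => hj (by simp [h0])
  rw [topIdx, dif_pos (filter_nonempty_of_ne h)]
  exact Finset.le_max' _ j (Finset.mem_filter.mpr ⟨Finset.mem_univ j, hj⟩)

lemma iter [NeZero k] {β : Type} [DecidableEq β] (T : Finset β) (f : β → (Fin k → ZMod 2))
    (hf : ∀ b ∈ T, f b ≠ 0) :
    coeff (∑ b ∈ T, Finsupp.single (topIdx (f b)) 1)
        (∏ b ∈ T, LF (f b)) = 1 ∧
      ∀ ν, coeff ν (∏ b ∈ T, LF (f b)) ≠ 0 →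
        Wt ν ≤ Wt (∑ b ∈ T, Finsupp.single (topIdx (f b)) 1) := by
  classical
  induction T using Finset.induction_on with
  | empty =>
    refine ⟨by simp [coeff_one], fun ν hν => ?_⟩
    simp only [Finset.prod_empty, coeff_one, ne_eq, ite_eq_right_iff, not_forall] at hν
    simp [← hν.1]
  | @insert b T hb ih =>
    have hf' : ∀ c ∈ T, f c ≠ 0 := fun c hc => hf c (Finset.mem_insert_of_mem hc)
    obtain ⟨ih1, ih2⟩ := ih hf'
    rw [Finset.prod_insert hb, Finset.sum_insert hb, mul_comm, add_comm]
    exact step _ _ ih1 ih2 (f b) (topIdx (f b))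
      (topIdx_ne_zero (hf b (Finset.mem_insert_self b T)))
      (fun j hj => topIdx_le hj)

lemma topIdx_eq_iff [NeZero k] {α : Fin k → ZMod 2} (h : α ≠ 0) (i : Fin k) :
    topIdx α = i ↔ (α i ≠ 0 ∧ ∀ j, i < j → α j = 0) := by
  constructor
  · rintro rfl
    refine ⟨topIdx_ne_zero h, fun j hj => ?_⟩
    by_contra hj0
    exact absurd (topIdx_le hj0) (not_le.mpr hj)
  · rintro ⟨h1, h2⟩
    have hle : i ≤ topIdx α := topIdx_le h1
    rcases eq_or_lt_of_le hle with he | hlt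
    · exact he.symm
    · exact absurd (h2 _ hlt) (topIdx_ne_zero h)

lemma count [NeZero k] (i : Fin k) :
    ((Finset.univ.filter fun α : Fin k → ZMod 2 => α ≠ 0).filter
      fun α => topIdx α = i).card = 2 ^ (i : ℕ) := by
  classical
  have hset : ((Finset.univ.filter fun α : Fin k → ZMod 2 => α ≠ 0).filter
      fun α => topIdx α = i)
      = Finset.univ.filter fun α : Fin k → ZMod 2 =>
          (α i ≠ 0 ∧ ∀ j, i < j → α j = 0) := by
    ext α
    simp only [Finset.mem_filter, Finset.mem_univ, true_and, and_assoc]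
    constructor
    · rintro ⟨h0, ht⟩; exact (topIdx_eq_iff h0 i).mp ht
    · rintro ⟨h1, h2⟩
      have h0 : α ≠ 0 := fun hz => h1 (by simp [hz])
      exact ⟨h0, (topIdx_eq_iff h0 i).mpr ⟨h1, h2⟩⟩
  rw [hset]
  rw [Finset.card_nbij' (fun α (j : Fin (i : ℕ)) => α ⟨j.1, j.2.trans i.2⟩)
    (fun g (l : Fin k) => if h : (l : ℕ) < (i : ℕ) then g ⟨l.1, h⟩
      else if l = i then 1 else 0)
    (fun a _ => Finset.mem_univ _) ?_ ?_ ?_]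
  · simp [Finset.card_univ]
  · intro g _
    simp only [Finset.mem_coe, Finset.mem_filter, Finset.mem_univ, true_and]
    constructor
    · simp
    · intro j hj
      have h1 : ¬ ((j:ℕ) < (i:ℕ)) := by
        have : (i:ℕ) < (j:ℕ) := hj
        omega
      rw [dif_neg h1, if_neg (by exact fun h => absurd h (ne_of_gt hj))]
  · intro α hα
    simp only [Finset.mem_coe, Finset.mem_filter, Finset.mem_univ, true_and] at hα
    funext l
    beta_reduce
    by_cases h1 : (l : ℕ) < (i : ℕ)
    · rw [dif_pos h1]
    · rw [dif_neg h1]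
      by_cases h2 : l = i
      · rw [if_pos h2, h2, zmod2_ne_zero _ hα.1]
      · have : i < l := by
          rcases lt_trichotomy i l with h | h | h
          · exact h
          · exact absurd h.symm h2
          · exact absurd h (by simpa using h1)
        rw [if_neg h2, hα.2 l this]
  · intro g _
    funext j
    simp only []
    rw [dif_pos (show ((⟨j.1, j.2.trans i.2⟩ : Fin k) : ℕ) < (i:ℕ) from j.2)]

lemma sum_two_pow (n : ℕ) : ∑ i ∈ Finset.range n, 2 ^ i = 2 ^ n - 1 := by
  induction n with
  | zero => simp
  | succ n ih =>
    rw [Finset.sum_range_succ, ih]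
    have : 1 ≤ 2 ^ n := Nat.one_le_two_pow
    have : (2:ℕ) ^ (n+1) = 2 * 2 ^ n := by ring
    omega

lemma ek_eq (k : ℕ) : ek k = ∏ α ∈ Finset.univ.filter
    (fun α : Fin k → ZMod 2 => α ≠ 0), LF α := rfl

lemma ek_homog (k : ℕ) : (ek k).IsHomogeneous (2 ^ k - 1) := by
  classical
  have hcard : (Finset.univ.filter fun α : Fin k → ZMod 2 => α ≠ 0).card = 2 ^ k - 1 := by
    rw [Finset.filter_ne', Finset.card_erase_of_mem (Finset.mem_univ 0), Finset.card_univ]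
    congr 1
    simp [Fintype.card_fun]
  rw [ek_eq, ← hcard, show (Finset.univ.filter fun α : Fin k → ZMod 2 => α ≠ 0).card
      = ∑ _α ∈ (Finset.univ.filter fun α : Fin k → ZMod 2 => α ≠ 0), 1 by simp]
  refine MvPolynomial.IsHomogeneous.prod _ _ _ fun α _ => ?_
  exact MvPolynomial.IsHomogeneous.sum _ _ _ fun i _ => isHomogeneous_C_mul_X _ _

lemma mem_part (k : ℕ) (hk : 1 ≤ k) (m : ℕ) (j : ℕ) (hj : m < j) :
    ek k ^ j ∈ Ideal.span (Set.range fun i : Fin k => (X i : MvPolynomial (Fin k) (ZMod 2)) ^ (2 ^ (i : ℕ) * m + 1)) := by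
  classical
  have hhom : (ek k ^ j).IsHomogeneous ((2 ^ k - 1) * j) := (ek_homog k).pow j
  rw [(ek k ^ j).as_sum]
  refine Ideal.sum_mem _ fun ν hν => ?_
  have hdeg : ∑ i, ν i = (2 ^ k - 1) * j := by
    have := hhom (MvPolynomial.mem_support_iff.mp hν)
    rw [← this]
    simp [Finsupp.weight, Finsupp.linearCombination, Finsupp.sum_fintype]
  have hex : ∃ i : Fin k, 2 ^ (i : ℕ) * m + 1 ≤ ν i := by
    by_contra hc
    push_neg at hc
    have hsum : ∑ i, ν i ≤ ∑ i : Fin k, 2 ^ (i : ℕ) * m :=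
      Finset.sum_le_sum fun i _ => by have := hc i; omega
    have h2 : ∑ i : Fin k, 2 ^ (i : ℕ) * m = (2 ^ k - 1) * m := by
      rw [← Finset.sum_mul]
      congr 1
      rw [Fin.sum_univ_eq_sum_range, sum_two_pow]
    have hk1 : 1 ≤ 2 ^ k - 1 := by
      have : (2:ℕ) ≤ 2 ^ k := by
        calc (2:ℕ) = 2 ^ 1 := by norm_num
        _ ≤ 2 ^ k := Nat.pow_le_pow_right (by norm_num) hk
      omega
    rw [hdeg, h2] at hsum
    have : j ≤ m := Nat.le_of_mul_le_mul_left hsum (by omega)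
    omega
  obtain ⟨i, hi⟩ := hex
  have hle : Finsupp.single i (2 ^ (i : ℕ) * m + 1) ≤ ν := by
    rw [Finsupp.single_le_iff]; exact hi
  have heq : (monomial ν) (coeff ν (ek k ^ j))
      = monomial (ν - Finsupp.single i (2 ^ (i : ℕ) * m + 1)) (coeff ν (ek k ^ j))
        * X i ^ (2 ^ (i : ℕ) * m + 1) := by
    rw [X_pow_eq_monomial, monomial_mul, mul_one, tsub_add_cancel_of_le hle]
  rw [heq]
  exact Ideal.mul_mem_left _ _ (Ideal.subset_span ⟨i, rfl⟩)

lemma notmem_part (k : ℕ) (hk : 1 ≤ k) (m : ℕ) :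
    ek k ^ m ∉ Ideal.span (Set.range fun i : Fin k =>
      (X i : MvPolynomial (Fin k) (ZMod 2)) ^ (2 ^ (i : ℕ) * m + 1)) := by
  classical
  haveI : NeZero k := ⟨by omega⟩
  set S := Finset.univ.filter (fun α : Fin k → ZMod 2 => α ≠ 0) with hS
  have hprod : ek k ^ m = ∏ p ∈ S ×ˢ Finset.range m, LF p.1 := by
    rw [ek_eq, Finset.prod_product, ← Finset.prod_pow]
    refine Finset.prod_congr rfl fun α _ => ?_
    simp
  have hne : ∀ p ∈ S ×ˢ Finset.range m, Prod.fst p ≠ (0 : Fin k → ZMod 2) :=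
    fun p hp => (Finset.mem_filter.mp (Finset.mem_product.mp hp).1).2
  obtain ⟨h1, -⟩ := iter (S ×ˢ Finset.range m) Prod.fst hne
  set μ := ∑ p ∈ S ×ˢ Finset.range m,
    Finsupp.single (topIdx ((Prod.fst : _ × ℕ → _) p)) (1:ℕ) with hμdef
  have hμ : ∀ i : Fin k, μ i = 2 ^ (i : ℕ) * m := by
    intro i
    rw [hμdef, Finsupp.finset_sum_apply]
    have : ∀ p : (Fin k → ZMod 2) × ℕ,
        (Finsupp.single (topIdx p.1) (1:ℕ)) i = if topIdx p.1 = i then 1 else 0 :=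
      fun p => Finsupp.single_apply
    rw [Finset.sum_congr rfl fun p _ => this p, Finset.sum_product]
    have h2 : (∑ x ∈ S, ∑ _y ∈ Finset.range m, if topIdx x = i then (1:ℕ) else 0)
        = ∑ x ∈ S, m * (if topIdx x = i then 1 else 0) := by
      refine Finset.sum_congr rfl fun x _ => ?_
      rw [Finset.sum_const, Finset.card_range, smul_eq_mul]
    rw [h2, ← Finset.mul_sum, ← Finset.card_filter, count i, mul_comm]
  have hc1 : coeff μ (ek k ^ m) = 1 := by rw [hprod]; exact h1
  intro hmem
  rw [Ideal.mem_span_range_iff_exists_fun] at hmem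
  obtain ⟨c, hc⟩ := hmem
  have hzero : coeff μ (∑ i, c i * X i ^ (2 ^ (i : ℕ) * m + 1)) = 0 := by
    rw [coeff_sum]
    refine Finset.sum_eq_zero fun i _ => ?_
    rw [X_pow_eq_monomial, coeff_mul_monomial', if_neg]
    rw [Finsupp.single_le_iff, hμ i]
    omega
  rw [hc, hc1] at hzero
  exact one_ne_zero hzero

end aux

theorem stmt1 (k : ℕ) (hk : 1 ≤ k) (m : ℕ) (hm : 0 < m) :
    (ek k ^ m ∉
        Ideal.span (Set.range fun i : Fin k => X i ^ (2 ^ (i : ℕ) * m + 1))) ∧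
      (ek k ^ (m + 1) ∈
        Ideal.span (Set.range fun i : Fin k => X i ^ (2 ^ (i : ℕ) * m + 1))) ∧
      (∀ j : ℕ, m < j →
        ek k ^ j ∈
          Ideal.span (Set.range fun i : Fin k => X i ^ (2 ^ (i : ℕ) * m + 1))) :=
  ⟨notmem_part k hk m, mem_part k hk m (m + 1) (by omega),
    fun j hj => mem_part k hk m j hj⟩
end

section
/- Let k ≥ 2 and let m, m_1, …, m_k be positive integers. If e_{k-1}^m ∉ (x_1^{m_1},…,x_{k-1}^{m_{k-1}}) in F_2[x_1,…,x_{k-1}] and m_k ≥ 2^{k-1} m + 1, then e_k^m ∉ (x_1^{m_1},…,x_k^{m_k}) in F_2[x_1,…,x_k]. -/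
open MvPolynomial

/-- The isomorphism separating out the last variable. -/
noncomputable def phiAux (n : ℕ) : MvPolynomial (Fin (n + 1)) (ZMod 2) ≃ₐ[ZMod 2]
    Polynomial (MvPolynomial (Fin n) (ZMod 2)) :=
  (renameEquiv (ZMod 2) (finRotate (n + 1))).trans (MvPolynomial.finSuccEquiv (ZMod 2) n)

lemma phiAux_X_last (n : ℕ) : phiAux n (X (Fin.last n)) = Polynomial.X := by
  simp [phiAux, finRotate_last, finSuccEquiv_X_zero]

lemma phiAux_X_castSucc (n : ℕ) (j : Fin n) :
    phiAux n (X j.castSucc) = Polynomial.C (X j) := by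
  simp [phiAux, finRotate_succ_apply, Fin.coeSucc_eq_succ, finSuccEquiv_X_succ]

lemma phiAux_C (n : ℕ) (c : ZMod 2) : phiAux n (C c) = Polynomial.C (C c) := by
  have : (C c : MvPolynomial (Fin (n + 1)) (ZMod 2)) = algebraMap (ZMod 2) _ c := rfl
  rw [this, AlgEquiv.commutes]
  rfl

lemma phiAux_linear (n : ℕ) (α : Fin (n + 1) → ZMod 2) :
    phiAux n (∑ i, C (α i) * X i) =
      Polynomial.C (∑ j : Fin n, C (α j.castSucc) * X j) +
        Polynomial.C (C (α (Fin.last n))) * Polynomial.X := by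
  rw [map_sum, Fin.sum_univ_castSucc]
  congr 1
  · rw [map_sum]
    refine Finset.sum_congr rfl fun j _ => ?_
    rw [map_mul, phiAux_C, phiAux_X_castSucc, ← Polynomial.C_mul]
  · rw [map_mul, phiAux_C, phiAux_X_last]

/-- The image of `ek (n+1)` under `phiAux`. -/
lemma phiAux_ek (n : ℕ) :
    phiAux n (ek (n + 1)) = Polynomial.C (ek n) *
      ∏ β : Fin n → ZMod 2,
        (Polynomial.X + Polynomial.C (∑ j, C (β j) * X j)) := by
  rw [ek, map_prod]
  rw [← Finset.prod_filter_mul_prod_filter_not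
      (Finset.univ.filter (fun α : Fin (n + 1) → ZMod 2 => α ≠ 0))
      (fun α => α (Fin.last n) = 0)]
  congr 1
  · -- α last = 0 part: gives C (ek n)
    rw [ek, map_prod]
    refine Finset.prod_nbij' (fun α => fun j : Fin n => α j.castSucc)
      (fun β => Fin.snoc β 0) ?_ ?_ ?_ ?_ ?_
    · intro α hα
      simp only [Finset.mem_filter, Finset.mem_univ, true_and] at hα ⊢
      intro hβ
      apply hα.1
      funext i
      refine Fin.lastCases hα.2 (fun j => ?_) i
      exact congrFun hβ j
    · intro β hβ
      simp only [Finset.mem_filter, Finset.mem_univ, true_and] at hβ ⊢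
      refine ⟨fun h0 => hβ (funext fun j => ?_), by simp⟩
      have := congrFun h0 (Fin.castSucc j)
      simpa using this
    · intro α hα
      simp only [Finset.mem_filter, Finset.mem_univ, true_and] at hα
      funext i
      refine Fin.lastCases ?_ (fun j => ?_) i <;> simp [hα.2]
    · intro β _
      funext j
      simp
    · intro α hα
      simp only [Finset.mem_filter, Finset.mem_univ, true_and] at hα
      rw [phiAux_linear, hα.2, map_zero, map_zero, zero_mul, add_zero]
  · -- α last = 1 part: gives the monic product
    refine Finset.prod_nbij' (fun α => fun j : Fin n => α j.castSucc)
      (fun β => Fin.snoc β 1) ?_ ?_ ?_ ?_ ?_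
    · intro _ _; exact Finset.mem_univ _
    · intro β _
      simp only [Finset.mem_filter, Finset.mem_univ, true_and]
      constructor
      · intro h0
        have := congrFun h0 (Fin.last n)
        simp at this
      · simp
    · intro α hα
      simp only [Finset.mem_filter, Finset.mem_univ, true_and] at hα
      have hone : α (Fin.last n) = 1 := by
        have : ∀ a : ZMod 2, a ≠ 0 → a = 1 := by decide
        exact this _ hα.2
      funext i
      refine Fin.lastCases ?_ (fun j => ?_) i <;> simp [hone]
    · intro β _
      funext j
      simp
    · intro α hα
      simp only [Finset.mem_filter, Finset.mem_univ, true_and] at hα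
      have hone : α (Fin.last n) = 1 := by
        have : ∀ a : ZMod 2, a ≠ 0 → a = 1 := by decide
        exact this _ hα.2
      rw [phiAux_linear, hone, map_one, map_one, one_mul, add_comm]

/-- The monic factor. -/
noncomputable def Qn (n : ℕ) : Polynomial (MvPolynomial (Fin n) (ZMod 2)) :=
  ∏ β : Fin n → ZMod 2, (Polynomial.X + Polynomial.C (∑ j, C (β j) * X j))

lemma Qn_monic (n : ℕ) : (Qn n).Monic :=
  Polynomial.monic_prod_of_monic _ _ fun _ _ => Polynomial.monic_X_add_C _

lemma Qn_natDegree (n : ℕ) : (Qn n).natDegree = 2 ^ n := by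
  rw [Qn, Polynomial.natDegree_prod_of_monic _ _ fun _ _ => Polynomial.monic_X_add_C _]
  rw [Finset.sum_congr rfl fun (β : Fin n → ZMod 2) _ => Polynomial.natDegree_X_add_C
    (∑ j, C (β j) * X j)]
  simp [Finset.card_univ, Fintype.card_fun]

lemma coeff_phiAux_ek_pow (n m : ℕ) :
    (phiAux n (ek (n + 1) ^ m)).coeff (m * 2 ^ n) = ek n ^ m := by
  rw [map_pow, phiAux_ek, ← Qn, mul_pow, ← map_pow, Polynomial.coeff_C_mul]
  have hd : ((Qn n) ^ m).natDegree = m * 2 ^ n := by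
    rw [(Qn_monic n).natDegree_pow, Qn_natDegree]
  rw [← hd, Polynomial.Monic.coeff_natDegree ((Qn_monic n).pow m), mul_one]

theorem stmt2 (k : ℕ) (hk : 2 ≤ k) (m : ℕ) (hm : 0 < m)
    (mv : Fin k → ℕ) (hmvpos : ∀ i, 0 < mv i)
    (h1 : ek (k - 1) ^ m ∉
        Ideal.span (Set.range fun i : Fin (k - 1) =>
          (X i : MvPolynomial (Fin (k - 1)) (ZMod 2)) ^ mv (Fin.castLE (Nat.sub_le k 1) i)))
    (h2 : 2 ^ (k - 1) * m + 1 ≤ mv ⟨k - 1, by omega⟩) :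
    ek k ^ m ∉ Ideal.span (Set.range fun i : Fin k => X i ^ mv i) := by
  intro hmem
  obtain ⟨n, rfl⟩ : ∃ n, k = n + 1 := ⟨k - 1, by omega⟩
  apply h1
  rw [← Ideal.submodule_span_eq, Submodule.mem_span_range_iff_exists_fun] at hmem ⊢
  obtain ⟨c, hc⟩ := hmem
  simp only [smul_eq_mul] at hc ⊢
  refine ⟨fun j => (phiAux n (c j.castSucc)).coeff (m * 2 ^ n), ?_⟩
  have key := congrArg (fun p => (phiAux n p).coeff (m * 2 ^ n)) hc
  beta_reduce at key
  rw [map_sum, Polynomial.finset_sum_coeff, Fin.sum_univ_castSucc,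
    coeff_phiAux_ek_pow] at key
  have h2' : 2 ^ n * m + 1 ≤ mv (Fin.last n) := h2
  have hlast :
      (phiAux n (c (Fin.last n) * X (Fin.last n) ^ mv (Fin.last n))).coeff (m * 2 ^ n) = 0 := by
    rw [map_mul, map_pow, phiAux_X_last, Polynomial.coeff_mul_X_pow']
    rw [if_neg]
    rw [mul_comm]
    omega
  rw [hlast, add_zero] at key
  refine Eq.trans (Finset.sum_congr rfl fun j _ => ?_) key
  rw [map_mul, map_pow, phiAux_X_castSucc, ← map_pow, Polynomial.coeff_mul_C]
  rfl
end

section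
/- For k = 2 and positive integers m, m_1, m_2: e_2^m = (x_1 x_2 (x_1 + x_2))^m ∉ (x_1^{m_1}, x_2^{m_2}) in F_2[x_1, x_2] if and only if there exists an integer i with 0 ≤ i ≤ m, the binomial coefficient C(m, i) odd, and 2m − m_2 + 1 ≤ i ≤ m_1 − m − 1. -/
open MvPolynomial Finset

lemma expand_e2 (m : ℕ) :
    ((X 0 * X 1 * (X 0 + X 1) : MvPolynomial (Fin 2) (ZMod 2)) ^ m) =
      ∑ i ∈ range (m + 1),
        monomial (Finsupp.single 0 (m + i) + Finsupp.single 1 (2 * m - i))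
          ((m.choose i : ZMod 2)) := by
  have h : ((X 0 * X 1 * (X 0 + X 1) : MvPolynomial (Fin 2) (ZMod 2)) ^ m)
      = (X 0)^m * (X 1)^m * (X 0 + X 1)^m := by rw [mul_pow, mul_pow]
  rw [h, add_pow, Finset.mul_sum]
  refine Finset.sum_congr rfl fun i hi => ?_
  have him : i ≤ m := by simpa [Nat.lt_succ_iff] using hi
  have : (X 0 : MvPolynomial (Fin 2) (ZMod 2)) ^ m * X 1 ^ m * (X 0 ^ i * X 1 ^ (m - i) * (m.choose i : MvPolynomial (Fin 2) (ZMod 2)))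
      = (X 0 ^ (m + i)) * (X 1 ^ (2 * m - i)) * (m.choose i : MvPolynomial (Fin 2) (ZMod 2)) := by
    rw [show 2 * m - i = m + (m - i) by omega, pow_add, pow_add]; ring
  rw [this]
  rw [X_pow_eq_monomial, X_pow_eq_monomial, monomial_mul]
  rw [show ((m.choose i : ℕ) : MvPolynomial (Fin 2) (ZMod 2)) = C ((m.choose i : ZMod 2)) by rw [map_natCast (C : ZMod 2 →+* MvPolynomial (Fin 2) (ZMod 2))]]
  rw [mul_comm, C_mul_monomial]
  simp

lemma coeff_e2 (m i : ℕ) (hi : i ≤ m) :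
    coeff (Finsupp.single 0 (m + i) + Finsupp.single 1 (2 * m - i))
      ((X 0 * X 1 * (X 0 + X 1) : MvPolynomial (Fin 2) (ZMod 2)) ^ m) = (m.choose i : ZMod 2) := by
  rw [expand_e2]
  rw [coeff_sum]
  rw [Finset.sum_eq_single i]
  · rw [coeff_monomial, if_pos rfl]
  · intro j hj hji
    rw [coeff_monomial, if_neg]
    intro h
    apply hji
    have := DFunLike.congr_fun h (0 : Fin 2)
    simpa using this
  · intro h
    exact absurd (Finset.mem_range.mpr (Nat.lt_succ_of_le hi)) h

lemma support_e2 (m : ℕ) (d : Fin 2 →₀ ℕ)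
    (hd : d ∈ ((X 0 * X 1 * (X 0 + X 1) : MvPolynomial (Fin 2) (ZMod 2)) ^ m).support) :
    ∃ i ≤ m, Odd (m.choose i) ∧
      d = Finsupp.single 0 (m + i) + Finsupp.single 1 (2 * m - i) := by
  rw [MvPolynomial.mem_support_iff, expand_e2, coeff_sum] at hd
  obtain ⟨i, hi, hne⟩ := Finset.exists_ne_zero_of_sum_ne_zero hd
  rw [coeff_monomial] at hne
  by_cases h : Finsupp.single 0 (m + i) + Finsupp.single 1 (2 * m - i) = d
  · refine ⟨i, by simpa [Nat.lt_succ_iff] using hi, ?_, h.symm⟩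
    rw [if_pos h] at hne
    have hdvd : ¬ 2 ∣ m.choose i := fun hdvd =>
      hne ((ZMod.natCast_eq_zero_iff _ 2).mpr hdvd)
    rw [Nat.odd_iff]
    omega
  · rw [if_neg h] at hne; exact absurd rfl hne

theorem stmt5 (m m1 m2 : ℕ) (hm : 0 < m) (hm1 : 0 < m1) (hm2 : 0 < m2) :
    ((X 0 * X 1 * (X 0 + X 1) : MvPolynomial (Fin 2) (ZMod 2)) ^ m ∉
        Ideal.span {(X 0 : MvPolynomial (Fin 2) (ZMod 2)) ^ m1,
          (X 1 : MvPolynomial (Fin 2) (ZMod 2)) ^ m2}) ↔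
      ∃ i : ℕ, i ≤ m ∧ Odd (Nat.choose m i) ∧
        2 * (m : ℤ) - (m2 : ℤ) + 1 ≤ (i : ℤ) ∧ (i : ℤ) ≤ (m1 : ℤ) - (m : ℤ) - 1 := by
  have hset : ({(X 0 : MvPolynomial (Fin 2) (ZMod 2)) ^ m1, (X 1 : MvPolynomial (Fin 2) (ZMod 2)) ^ m2} : Set _)
      = (fun s => monomial s (1 : ZMod 2)) ''
        {Finsupp.single (0 : Fin 2) m1, Finsupp.single (1 : Fin 2) m2} := by
    rw [Set.image_pair, X_pow_eq_monomial, X_pow_eq_monomial]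
  rw [hset, mem_ideal_span_monomial_image]
  constructor
  · intro hnot
    by_contra hno
    push_neg at hno
    apply hnot
    intro d hd
    obtain ⟨i, hi, hodd, rfl⟩ := support_e2 m d hd
    have := hno i hi hodd
    rcases le_or_gt (i : ℤ) ((2 : ℤ) * m - m2) with h | h
    · refine ⟨Finsupp.single 1 m2, by simp, ?_⟩
      rw [Finsupp.single_le_iff]
      simp only [Finsupp.coe_add, Pi.add_apply, Finsupp.single_apply]
      norm_num
      omega
    · have h2 : ((m1 : ℤ)) ≤ m + i := by
        have h' := this (by omega)
        omega
      refine ⟨Finsupp.single 0 m1, by simp, ?_⟩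
      rw [Finsupp.single_le_iff]
      simp only [Finsupp.coe_add, Pi.add_apply, Finsupp.single_apply]
      norm_num
      omega
  · rintro ⟨i, hi, hodd, h1, h2⟩ hmem
    have hd : (Finsupp.single (0 : Fin 2) (m + i) + Finsupp.single 1 (2 * m - i)) ∈
        ((X 0 * X 1 * (X 0 + X 1) : MvPolynomial (Fin 2) (ZMod 2)) ^ m).support := by
      rw [MvPolynomial.mem_support_iff, coeff_e2 m i hi]
      intro h0
      rw [ZMod.natCast_eq_zero_iff] at h0
      rw [Nat.odd_iff] at hodd
      omega
    obtain ⟨s, hs, hle⟩ := hmem _ hd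
    rcases hs with rfl | rfl
    · rw [Finsupp.single_le_iff] at hle
      simp only [Finsupp.coe_add, Pi.add_apply, Finsupp.single_apply] at hle
      norm_num at hle
      omega
    · rw [Finsupp.single_le_iff] at hle
      simp only [Finsupp.coe_add, Pi.add_apply, Finsupp.single_apply] at hle
      norm_num at hle
      omega
end

section
/- For positive integers t and r with 1 ≤ r ≤ 2^t, it holds that (x_1 x_2 (x_1 + x_2))^{2^t + r − 1} ∉ (x_1^{2^t + 2r}, x_2^{2^{t+1} + r}) in F_2[x_1, x_2]. -/
open MvPolynomial

-- coefficient of x^s in (x+y)^s is 1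
lemma aux_exists (s : ℕ) : ∃ c : MvPolynomial (Fin 2) (ZMod 2),
    (X 0 + X 1) ^ s = X 0 ^ s + X 1 * c := by
  induction s with
  | zero => exact ⟨0, by simp⟩
  | succ n ih =>
    obtain ⟨c, hc⟩ := ih
    exact ⟨X 0 ^ n + c * (X 0 + X 1), by rw [pow_succ, hc]; ring⟩

lemma aux_coeff (s : ℕ) :
    coeff (Finsupp.single 0 s) ((X 0 + X 1 : MvPolynomial (Fin 2) (ZMod 2)) ^ s) = 1 := by
  obtain ⟨c, hc⟩ := aux_exists s
  rw [hc, coeff_add, coeff_X_pow]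
  have h2 : coeff (Finsupp.single (0 : Fin 2) s) (X 1 * c) = 0 := by
    rw [X, coeff_monomial_mul', if_neg]
    rw [Finsupp.single_le_iff]
    simp
  rw [h2]
  simp

theorem stmt6 (t r : ℕ) (ht : 1 ≤ t) (hr1 : 1 ≤ r) (hr2 : r ≤ 2 ^ t) :
    (X 0 * X 1 * (X 0 + X 1) : MvPolynomial (Fin 2) (ZMod 2)) ^ (2 ^ t + r - 1) ∉
      Ideal.span {(X 0 : MvPolynomial (Fin 2) (ZMod 2)) ^ (2 ^ t + 2 * r),
        (X 1 : MvPolynomial (Fin 2) (ZMod 2)) ^ (2 ^ (t + 1) + r)} := by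
  intro h
  rw [Ideal.mem_span_pair] at h
  obtain ⟨a, b, hab⟩ := h
  set s := r - 1 with hs
  set j := 2 ^ t + s with hj
  have hjr : 2 ^ t + r - 1 = j := by omega
  have hst : s < 2 ^ t := by omega
  -- the witness exponent
  set d : Fin 2 →₀ ℕ := (Finsupp.single 0 j + Finsupp.single 1 (j + 2 ^ t))
      + Finsupp.single 0 s with hd
  have hd0 : d 0 = j + s := by simp [hd, Finsupp.single_apply]
  have hd1 : d 1 = j + 2 ^ t := by simp [hd, Finsupp.single_apply]
  -- key expansion
  have key : (X 0 * X 1 * (X 0 + X 1) : MvPolynomial (Fin 2) (ZMod 2)) ^ j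
      = monomial (Finsupp.single 0 j + Finsupp.single 1 (j + 2 ^ t)) 1 * (X 0 + X 1) ^ s
      + monomial (Finsupp.single 0 (j + 2 ^ t) + Finsupp.single 1 j) 1 * (X 0 + X 1) ^ s := by
    have hfr : ((X 0 + X 1 : MvPolynomial (Fin 2) (ZMod 2))) ^ (2 ^ t)
        = X 0 ^ (2 ^ t) + X 1 ^ (2 ^ t) := add_pow_char_pow _ _ 2 t
    calc (X 0 * X 1 * (X 0 + X 1) : MvPolynomial (Fin 2) (ZMod 2)) ^ j
        = X 0 ^ j * X 1 ^ j * ((X 0 + X 1) ^ (2 ^ t) * (X 0 + X 1) ^ s) := by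
          rw [mul_pow, mul_pow, ← pow_add]
      _ = X 0 ^ j * X 1 ^ (j + 2 ^ t) * (X 0 + X 1) ^ s
          + X 0 ^ (j + 2 ^ t) * X 1 ^ j * (X 0 + X 1) ^ s := by
          rw [hfr]; ring
      _ = _ := by
          rw [X_pow_eq_monomial, X_pow_eq_monomial, X_pow_eq_monomial, X_pow_eq_monomial,
            monomial_mul, monomial_mul, one_mul]
  -- coefficient of the product at d is 1
  have hc1 : coeff d ((X 0 * X 1 * (X 0 + X 1) : MvPolynomial (Fin 2) (ZMod 2)) ^ j) = 1 := by
    rw [key, coeff_add, coeff_monomial_mul', coeff_monomial_mul']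
    rw [if_pos (by rw [hd]; exact le_self_add), if_neg, hd, add_tsub_cancel_left]
    · rw [aux_coeff, add_zero, one_mul]
    · intro hle
      have := hle 0
      simp [hd0, Finsupp.single_apply] at this
      omega
  -- coefficients of the ideal element at d are 0
  have hz : coeff d (a * X 0 ^ (2 ^ t + 2 * r) + b * X 1 ^ (2 ^ (t + 1) + r)) = 0 := by
    rw [coeff_add, X_pow_eq_monomial, X_pow_eq_monomial, coeff_mul_monomial',
      coeff_mul_monomial', if_neg, if_neg, add_zero]
    · rw [Finsupp.single_le_iff, hd1]
      have : 2 ^ (t + 1) = 2 * 2 ^ t := by ring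
      omega
    · rw [Finsupp.single_le_iff, hd0]
      omega
  rw [← hjr, ← hab, hz] at hc1
  exact one_ne_zero hc1.symm
end

section
/- Let k ≥ 1 and let m, m_1, …, m_k be positive integers. If e_k^m ∉ (x_1^{m_1},…,x_k^{m_k}) in F_2[x_1,…,x_k], then e_k^{2m} ∉ (x_1^{2m_1},…,x_k^{2m_k}). -/
open MvPolynomial

lemma two_smul_finsupp_inj {σ : Type*} {v u : σ →₀ ℕ} (h : 2 • v = 2 • u) : v = u := by
  ext i
  have := DFunLike.congr_fun h i
  simp only [Finsupp.smul_apply, smul_eq_mul] at this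
  omega

lemma expand_monomial_smul {σ : Type*} {R : Type*} [CommSemiring R] (v : σ →₀ ℕ) (a : R) :
    expand 2 (monomial v a) = monomial (2 • v) a := by
  rw [expand_monomial, monomial_eq]

lemma coeff_expand_two {σ : Type*} {R : Type*} [CommSemiring R]
    (f : MvPolynomial σ R) (u : σ →₀ ℕ) :
    coeff (2 • u) (expand 2 f) = coeff u f := by
  classical
  conv_lhs => rw [(support_sum_monomial_coeff f).symm]
  rw [map_sum, coeff_sum]
  simp_rw [expand_monomial_smul]
  simp_rw [coeff_monomial]
  have : ∀ v ∈ f.support,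
      (if 2 • v = 2 • u then coeff v f else 0) = (if v = u then coeff v f else 0) := by
    intro v _
    congr 1
    simp only [eq_iff_iff]
    constructor
    · exact two_smul_finsupp_inj
    · rintro rfl; rfl
  rw [Finset.sum_congr rfl this, Finset.sum_ite_eq' f.support u (fun v => coeff v f)]
  by_cases hu : u ∈ f.support
  · simp [hu]
  · rw [if_neg hu, (notMem_support_iff.mp hu)]

theorem stmt8 (k : ℕ) (hk : 1 ≤ k) (m : ℕ) (hm : 0 < m)
    (mv : Fin k → ℕ) (hmvpos : ∀ i, 0 < mv i)
    (h : ek k ^ m ∉ Ideal.span (Set.range fun i : Fin k => X i ^ mv i)) :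
    ek k ^ (2 * m) ∉ Ideal.span (Set.range fun i : Fin k => X i ^ (2 * mv i)) := by
  have key : ∀ (n : Fin k → ℕ) (f : MvPolynomial (Fin k) (ZMod 2)),
      f ∈ Ideal.span (Set.range fun i : Fin k => X i ^ n i) ↔
        ∀ u ∈ f.support, ∃ i, n i ≤ u i := by
    intro n f
    have hset : (Set.range fun i : Fin k => (X i : MvPolynomial (Fin k) (ZMod 2)) ^ n i)
        = (fun s => monomial s (1 : ZMod 2)) '' Set.range (fun i => Finsupp.single i (n i)) := by
      rw [← Set.range_comp]
      apply congrArg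
      funext i
      simp [Function.comp, X_pow_eq_monomial]
    rw [hset, mem_ideal_span_monomial_image]
    apply forall₂_congr
    intro u _
    constructor
    · rintro ⟨si, ⟨i, rfl⟩, hle⟩
      exact ⟨i, by simpa using (Finsupp.single_le_iff.mp hle)⟩
    · rintro ⟨i, hi⟩
      exact ⟨Finsupp.single i (n i), ⟨i, rfl⟩, Finsupp.single_le_iff.mpr hi⟩
  rw [key] at h ⊢
  push_neg at h ⊢
  obtain ⟨u, hu, hlt⟩ := h
  refine ⟨2 • u, ?_, fun i => ?_⟩
  · have : ek k ^ (2 * m) = expand 2 (ek k ^ m) := by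
      rw [expand_zmod, ← pow_mul, mul_comm]
    rw [this, mem_support_iff, coeff_expand_two, ← mem_support_iff]
    exact hu
  · have := hlt i
    simp only [Finsupp.smul_apply, smul_eq_mul]
    omega
end

section
/- Let n ≥ 1, k ≥ 1 be integers and consider, in the polynomial ring R[x_1,…,x_k] over a commutative ring R, the polynomials f_i := Σ_{0 ≤ r_1+⋯+r_i ≤ n−i+1} w_{n−i+1−(r_1+⋯+r_i)} x_1^{r_1}⋯x_i^{r_i} and f̄_i := Σ_{0 ≤ r_1+⋯+r_k ≤ n−i+1} w_{n−i+1−(r_1+⋯+r_k)} x_1^{r_1}⋯x_k^{r_k} for 1 ≤ i ≤ k, where w_0, w_1, …, w_n ∈ R are fixed elements (with w_s := 0 for s < 0). Then the ideals (f_1,…,f_k) and (f̄_1,…,f̄_k) of R[x_1,…,x_k] are equal. -/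
open MvPolynomial

variable (R : Type*) [CommRing R]

/-- `f_i = Σ_{0 ≤ r_1+⋯+r_i ≤ n−i+1} w_{n−i+1−(r_1+⋯+r_i)} x_1^{r_1}⋯x_i^{r_i}`,
where the index `i : Fin k` is 0-indexed (so `i.val = i − 1` and `n − i + 1 = n − i.val`),
and the monomials only involve the variables `x_1,…,x_i` (0-indexed: `j ≤ i.val`). -/
noncomputable def fpoly (k n : ℕ) (w : ℕ → R) (i : Fin k) : MvPolynomial (Fin k) R :=
  ∑ r ∈ Finset.univ.filter (fun r : Fin k → Fin (n + 2) =>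
      (∑ j, (r j : ℕ)) ≤ n - (i : ℕ) ∧ ∀ j : Fin k, (i : ℕ) < (j : ℕ) → r j = 0),
    C (w (n - (i : ℕ) - ∑ j, (r j : ℕ))) * ∏ j, X j ^ (r j : ℕ)

/-- `f̄_i = Σ_{0 ≤ r_1+⋯+r_k ≤ n−i+1} w_{n−i+1−(r_1+⋯+r_k)} x_1^{r_1}⋯x_k^{r_k}`,
where monomials may involve all the variables `x_1,…,x_k`. -/
noncomputable def fbarpoly (k n : ℕ) (w : ℕ → R) (i : Fin k) : MvPolynomial (Fin k) R :=
  ∑ r ∈ Finset.univ.filter (fun r : Fin k → Fin (n + 2) =>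
      (∑ j, (r j : ℕ)) ≤ n - (i : ℕ)),
    C (w (n - (i : ℕ) - ∑ j, (r j : ℕ))) * ∏ j, X j ^ (r j : ℕ)

/-- Generalized family: sum bound `n - a`, support bound `b`. -/
noncomputable def Fgen (k n : ℕ) (w : ℕ → R) (a b : ℕ) : MvPolynomial (Fin k) R :=
  ∑ r ∈ Finset.univ.filter (fun r : Fin k → Fin (n + 2) =>
      (∑ j, (r j : ℕ)) ≤ n - a ∧ ∀ j : Fin k, b < (j : ℕ) → r j = 0),
    C (w (n - a - ∑ j, (r j : ℕ))) * ∏ j, X j ^ (r j : ℕ)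

lemma fbarpoly_eq_Fgen (k n : ℕ) (w : ℕ → R) (i : Fin k) :
    fbarpoly R k n w i = Fgen R k n w (i : ℕ) (k - 1) := by
  unfold fbarpoly Fgen
  refine Finset.sum_congr ?_ fun _ _ => rfl
  refine (Finset.filter_congr fun r _ => ?_)
  constructor
  · intro h
    exact ⟨h, fun j hj => absurd j.isLt (by omega)⟩
  · exact fun h => h.1

lemma Fgen_const (k n : ℕ) (w : ℕ → R) (a b : ℕ) (ha : n ≤ a) :
    Fgen R k n w a b = C (w 0) := by
  unfold Fgen
  have h0 : n - a = 0 := by omega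
  trans ∑ r ∈ ({fun _ => 0} : Finset (Fin k → Fin (n + 2))),
      C (w (n - a - ∑ j, (r j : ℕ))) * ∏ j, X j ^ (r j : ℕ)
  · refine Finset.sum_congr ?_ fun _ _ => rfl
    ext r
    simp only [Finset.mem_filter, Finset.mem_univ, true_and, Finset.mem_singleton]
    constructor
    · rintro ⟨h1, _⟩
      funext j
      have hz : ∑ j, (r j : ℕ) = 0 := by omega
      have := (Finset.sum_eq_zero_iff).mp hz j (Finset.mem_univ j)
      exact Fin.ext (by simpa using this)
    · rintro rfl
      exact ⟨by simp, fun j _ => rfl⟩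
  · rw [Finset.sum_singleton]
    simp [h0]

/-- decrement in `Fin (n+2)`. -/
def decF (n : ℕ) (x : Fin (n + 2)) : Fin (n + 2) :=
  ⟨(x : ℕ) - 1, Nat.lt_of_le_of_lt (Nat.sub_le _ _) x.isLt⟩

/-- increment (capped) in `Fin (n+2)`. -/
def incF (n : ℕ) (x : Fin (n + 2)) : Fin (n + 2) :=
  ⟨min ((x : ℕ) + 1) (n + 1), Nat.lt_succ_of_le (Nat.min_le_right _ _)⟩

@[simp] lemma decF_val (n : ℕ) (x : Fin (n + 2)) : (decF n x : ℕ) = (x : ℕ) - 1 := rfl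
@[simp] lemma incF_val (n : ℕ) (x : Fin (n + 2)) :
    (incF n x : ℕ) = min ((x : ℕ) + 1) (n + 1) := rfl

lemma Fgen_rec (k n : ℕ) (w : ℕ → R) (a b : ℕ) (ha : a < n) (hb : b + 1 < k) :
    Fgen R k n w a (b + 1) =
      Fgen R k n w a b + X (⟨b + 1, hb⟩ : Fin k) * Fgen R k n w (a + 1) (b + 1) := by
  classical
  set m : Fin k := ⟨b + 1, hb⟩ with hm
  -- helper lemmas about sums/products of updated tuples
  have hsum : ∀ (r : Fin k → Fin (n + 2)) (v : Fin (n + 2)),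
      (∑ j, ((Function.update r m v) j : ℕ)) = (v : ℕ) + ∑ j ∈ Finset.univ.erase m, (r j : ℕ) := by
    intro r v
    have hcomp : ∀ j : Fin k, ((Function.update r m v) j : ℕ)
        = Function.update (fun j => ((r j : ℕ))) m (v : ℕ) j := by
      intro j
      by_cases h : j = m
      · subst h; simp
      · simp [h]
    rw [Finset.sum_congr rfl fun j _ => hcomp j,
      Finset.sum_update_of_mem (Finset.mem_univ m), Finset.sdiff_singleton_eq_erase]
  have hrm : ∀ r : Fin k → Fin (n + 2),
      (∑ j, (r j : ℕ)) = (r m : ℕ) + ∑ j ∈ Finset.univ.erase m, (r j : ℕ) :=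
    fun r => (Finset.add_sum_erase _ _ (Finset.mem_univ m)).symm
  have hprod : ∀ (r : Fin k → Fin (n + 2)) (v : Fin (n + 2)),
      (∏ j, (X j : MvPolynomial (Fin k) R) ^ ((Function.update r m v) j : ℕ))
        = X m ^ (v : ℕ) * ∏ j ∈ Finset.univ.erase m, X j ^ (r j : ℕ) := by
    intro r v
    have hcomp : ∀ j : Fin k, (X j : MvPolynomial (Fin k) R) ^ ((Function.update r m v) j : ℕ)
        = Function.update (fun j => (X j : MvPolynomial (Fin k) R) ^ (r j : ℕ)) m
            (X m ^ (v : ℕ)) j := by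
      intro j
      by_cases h : j = m
      · subst h; simp
      · simp [h]
    rw [Finset.prod_congr rfl fun j _ => hcomp j,
      Finset.prod_update_of_mem (Finset.mem_univ m), Finset.sdiff_singleton_eq_erase]
  have hprodr : ∀ r : Fin k → Fin (n + 2),
      (∏ j, (X j : MvPolynomial (Fin k) R) ^ (r j : ℕ))
        = X m ^ (r m : ℕ) * ∏ j ∈ Finset.univ.erase m, X j ^ (r j : ℕ) :=
    fun r => (Finset.mul_prod_erase _ _ (Finset.mem_univ m)).symm
  unfold Fgen
  rw [← Finset.sum_filter_add_sum_filter_not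
      (Finset.univ.filter fun r : Fin k → Fin (n + 2) =>
        (∑ j, (r j : ℕ)) ≤ n - a ∧ ∀ j : Fin k, b + 1 < (j : ℕ) → r j = 0)
      (fun r => r m = 0)]
  congr 1
  · -- terms with r m = 0 give Fgen a b
    rw [Finset.filter_filter]
    refine Finset.sum_congr (Finset.filter_congr fun r _ => ?_) fun _ _ => rfl
    constructor
    · rintro ⟨⟨h1, h2⟩, h3⟩
      refine ⟨h1, fun j hj => ?_⟩
      rcases Nat.lt_or_ge (b + 1) (j : ℕ) with h | h
      · exact h2 j h
      · have hjm : j = m := Fin.ext (by simp [hm]; omega)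
        rw [hjm]; exact h3
    · rintro ⟨h1, h2⟩
      exact ⟨⟨h1, fun j hj => h2 j (by omega)⟩, h2 m (by simp [hm])⟩
  · -- terms with r m ≠ 0 give X m * Fgen (a+1) (b+1)
    rw [Finset.filter_filter, Finset.mul_sum]
    refine Finset.sum_nbij' (i := fun r => Function.update r m (decF n (r m)))
      (j := fun r => Function.update r m (incF n (r m))) ?_ ?_ ?_ ?_ ?_
    · intro r hr
      simp only [Finset.mem_filter, Finset.mem_univ, true_and] at hr ⊢
      obtain ⟨⟨h1, h2⟩, h3⟩ := hr
      have hrm1 : 1 ≤ (r m : ℕ) := by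
        rcases Nat.eq_zero_or_pos (r m : ℕ) with h | h
        · exact absurd (Fin.ext (by simpa using h)) h3
        · exact h
      have h1' := hrm r
      constructor
      · rw [hsum]
        simp only [decF_val]
        omega
      · intro j hj
        have hjm : j ≠ m := by
          intro h; rw [h, hm] at hj; simp at hj
        rw [Function.update_of_ne hjm]
        exact h2 j hj
    · intro r hr
      simp only [Finset.mem_filter, Finset.mem_univ, true_and] at hr ⊢
      obtain ⟨h1, h2⟩ := hr
      have hle : (r m : ℕ) ≤ ∑ j, (r j : ℕ) :=
        Finset.single_le_sum (f := fun j => ((r j : ℕ))) (fun j _ => Nat.zero_le _) (Finset.mem_univ m)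
      have h1' := hrm r
      refine ⟨⟨?_, ?_⟩, ?_⟩
      · rw [hsum]
        simp only [incF_val]
        omega
      · intro j hj
        have hjm : j ≠ m := by
          intro h; rw [h, hm] at hj; simp at hj
        rw [Function.update_of_ne hjm]
        exact h2 j hj
      · rw [Function.update_self]
        intro h
        have := congrArg Fin.val h
        simp only [incF_val, Fin.val_zero] at this
        omega
    · intro r hr
      simp only [Finset.mem_filter, Finset.mem_univ, true_and] at hr
      obtain ⟨⟨h1, h2⟩, h3⟩ := hr
      have hrm1 : 1 ≤ (r m : ℕ) := by
        rcases Nat.eq_zero_or_pos (r m : ℕ) with h | h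
        · exact absurd (Fin.ext (by simpa using h)) h3
        · exact h
      rw [Function.update_self, Function.update_idem]
      have : incF n (decF n (r m)) = r m := by
        apply Fin.ext
        have := (r m).isLt
        simp only [incF_val, decF_val]
        omega
      rw [this, Function.update_eq_self]
    · intro r hr
      simp only [Finset.mem_filter, Finset.mem_univ, true_and] at hr
      obtain ⟨h1, h2⟩ := hr
      have hle : (r m : ℕ) ≤ ∑ j, (r j : ℕ) :=
        Finset.single_le_sum (f := fun j => ((r j : ℕ))) (fun j _ => Nat.zero_le _) (Finset.mem_univ m)
      rw [Function.update_self, Function.update_idem]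
      have : decF n (incF n (r m)) = r m := by
        apply Fin.ext
        simp only [decF_val, incF_val]
        omega
      rw [this, Function.update_eq_self]
    · intro r hr
      simp only [Finset.mem_filter, Finset.mem_univ, true_and] at hr
      obtain ⟨⟨h1, h2⟩, h3⟩ := hr
      have hrm1 : 1 ≤ (r m : ℕ) := by
        rcases Nat.eq_zero_or_pos (r m : ℕ) with h | h
        · exact absurd (Fin.ext (by simpa using h)) h3
        · exact h
      rw [hsum, hprod, hprodr r, hrm r]
      simp only [decF_val]
      have hle : (r m : ℕ) + (∑ j ∈ Finset.univ.erase m, (r j : ℕ)) ≤ n - a := by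
        rw [← hrm r]; exact h1
      have hc : n - a - ((r m : ℕ) + ∑ j ∈ Finset.univ.erase m, (r j : ℕ))
          = n - (a + 1) - ((r m : ℕ) - 1 + ∑ j ∈ Finset.univ.erase m, (r j : ℕ)) := by
        omega
      rw [hc]
      have hx : (X m : MvPolynomial (Fin k) R) ^ (r m : ℕ)
          = X m * X m ^ ((r m : ℕ) - 1) := by
        conv_lhs => rw [show (r m : ℕ) = ((r m : ℕ) - 1) + 1 by omega]
        rw [pow_succ]
        ring
      rw [hx]
      ring

lemma mem_span_fpoly (k n : ℕ) (w : ℕ → R) :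
    ∀ d a b, a ≤ b → b < k → b - a ≤ d →
      Fgen R k n w a b ∈ Ideal.span (Set.range (fpoly R k n w)) := by
  intro d
  induction d with
  | zero =>
    intro a b hab hbk hd
    have : a = b := by omega
    subst this
    exact Ideal.subset_span ⟨⟨a, hbk⟩, rfl⟩
  | succ d ih =>
    intro a b hab hbk hd
    rcases le_or_gt n a with han | han
    · rw [Fgen_const R k n w a b han]
      have hb : fpoly R k n w ⟨b, hbk⟩ = C (w 0) := by
        rw [show fpoly R k n w ⟨b, hbk⟩ = Fgen R k n w b b from rfl]
        exact Fgen_const R k n w b b (by omega)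
      rw [← hb]
      exact Ideal.subset_span ⟨_, rfl⟩
    · rcases Nat.eq_or_lt_of_le hab with heq | hlt
      · subst heq
        exact Ideal.subset_span ⟨⟨a, hbk⟩, rfl⟩
      · obtain ⟨b', rfl⟩ : ∃ b', b = b' + 1 := ⟨b - 1, by omega⟩
        rw [Fgen_rec R k n w a b' han hbk]
        exact Ideal.add_mem _ (ih a b' (by omega) (by omega) (by omega))
          (Ideal.mul_mem_left _ _ (ih (a + 1) (b' + 1) (by omega) hbk (by omega)))

lemma mem_span_fbarpoly (k n : ℕ) (w : ℕ → R) :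
    ∀ d a b, a < k → a ≤ b → b ≤ k - 1 → (k - 1) - b ≤ d →
      Fgen R k n w a b ∈ Ideal.span (Set.range (fbarpoly R k n w)) := by
  intro d
  induction d with
  | zero =>
    intro a b hak hab hbk hd
    have hb : b = k - 1 := by omega
    subst hb
    exact Ideal.subset_span ⟨⟨a, hak⟩, fbarpoly_eq_Fgen R k n w ⟨a, hak⟩⟩
  | succ d ih =>
    intro a b hak hab hbk hd
    rcases le_or_gt n a with han | han
    · rw [Fgen_const R k n w a b han]
      have hb : fbarpoly R k n w ⟨a, hak⟩ = C (w 0) := by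
        rw [fbarpoly_eq_Fgen R k n w ⟨a, hak⟩]
        exact Fgen_const R k n w a _ han
      rw [← hb]
      exact Ideal.subset_span ⟨_, rfl⟩
    · rcases Nat.eq_or_lt_of_le hbk with heq | hlt
      · subst heq
        exact Ideal.subset_span ⟨⟨a, hak⟩, fbarpoly_eq_Fgen R k n w ⟨a, hak⟩⟩
      · have hb1 : b + 1 < k := by omega
        have hrec := Fgen_rec R k n w a b han hb1
        have heq : Fgen R k n w a b
            = Fgen R k n w a (b + 1) - X (⟨b + 1, hb1⟩ : Fin k) * Fgen R k n w (a + 1) (b + 1) := by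
          rw [hrec]; ring
        rw [heq]
        exact Ideal.sub_mem _ (ih a (b + 1) hak (by omega) (by omega) (by omega))
          (Ideal.mul_mem_left _ _ (ih (a + 1) (b + 1) (by omega) (by omega) (by omega) (by omega)))

theorem stmt13 (k n : ℕ) (hk : 1 ≤ k) (hn : 1 ≤ n) (w : ℕ → R) :
    Ideal.span (Set.range (fpoly R k n w)) =
      Ideal.span (Set.range (fbarpoly R k n w)) := by
  refine le_antisymm (Ideal.span_le.mpr ?_) (Ideal.span_le.mpr ?_)
  · rintro _ ⟨i, rfl⟩
    show fpoly R k n w i ∈ Ideal.span (Set.range (fbarpoly R k n w))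
    rw [show fpoly R k n w i = Fgen R k n w (i : ℕ) (i : ℕ) from rfl]
    exact mem_span_fbarpoly R k n w k (i : ℕ) (i : ℕ) i.isLt le_rfl
      (by have := i.isLt; omega) (by omega)
  · rintro _ ⟨i, rfl⟩
    show fbarpoly R k n w i ∈ Ideal.span (Set.range (fpoly R k n w))
    rw [fbarpoly_eq_Fgen R k n w i]
    exact mem_span_fpoly R k n w k (i : ℕ) (k - 1) (by have := i.isLt; omega)
      (by omega) (by have := i.isLt; omega)
end

section
/- Let R be a commutative ring, k ≥ 1, and for each 1 ≤ i ≤ k let g_i ∈ R[x_1,…,x_k] be a polynomial of the form g_i = x_i^{n_i} + (terms of lower degree in x_i with coefficients in R[x_1,…,x_k] not involving higher powers of x_i), specifically g_i = Σ_{s=0}^{n_i} c_{i,s} x_i^s with c_{i,n_i} = 1 and c_{i,s} ∈ R of positive 'augmentation' (mapping to 0 under a ring map ε: R → F_2) for s < n_i. Suppose a_1,…,a_k are nonnegative integers such that x_1^{a_1}⋯x_k^{a_k} ∉ (g_1,…,g_k) while x_i^{a_i+1} ∈ (g_1,…,g_k) for each i. Then the kernel of the induced map F_2[x_1,…,x_k]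 → R[x_1,…,x_k]/(g_1,…,g_k) equals the ideal (x_1^{a_1+1},…,x_k^{a_k+1}). -/
open MvPolynomial

namespace Stmt16Aux

variable {k : ℕ}

/-- truncation of a polynomial to the monomials with exponent ≤ A -/
noncomputable def tr (A : Fin k →₀ ℕ) (p : MvPolynomial (Fin k) (ZMod 2)) :
    MvPolynomial (Fin k) (ZMod 2) :=
  ∑ c ∈ p.support.filter (fun c => c ≤ A), monomial c (coeff c p)

lemma coeff_tr (A : Fin k →₀ ℕ) (p : MvPolynomial (Fin k) (ZMod 2)) (d : Fin k →₀ ℕ) :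
    coeff d (tr A p) = if d ≤ A then coeff d p else 0 := by
  rw [tr, coeff_sum]
  simp only [coeff_monomial]
  rw [Finset.sum_ite_eq' (p.support.filter (fun c => c ≤ A)) d (fun c => coeff c p)]
  by_cases h1 : d ≤ A <;> by_cases h2 : d ∈ p.support <;>
    simp_all [Finset.mem_filter, notMem_support_iff]

end Stmt16Aux

namespace Stmt16Aux

variable {k : ℕ}

lemma monomial_one_mem_span (a : Fin k → ℕ) (c : Fin k →₀ ℕ) (i : Fin k) (hi : a i < c i) :
    monomial c (1 : ZMod 2) ∈
      Ideal.span (Set.range fun i => (X i : MvPolynomial (Fin k) (ZMod 2)) ^ (a i + 1)) := by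
  have hle : Finsupp.single i (a i + 1) ≤ c := by
    rw [Finsupp.single_le_iff]; omega
  have : monomial c (1 : ZMod 2) =
      monomial (c - Finsupp.single i (a i + 1)) 1 * (X i ^ (a i + 1)) := by
    rw [X_pow_eq_monomial, monomial_mul, one_mul, tsub_add_cancel_of_le hle]
  rw [this]
  exact Ideal.mul_mem_left _ _ (Ideal.subset_span ⟨i, rfl⟩)

lemma mem_span_of_forall (a : Fin k → ℕ) (p : MvPolynomial (Fin k) (ZMod 2))
    (hp : ∀ c ∈ p.support, ∃ i, a i < c i) :
    p ∈ Ideal.span (Set.range fun i => (X i : MvPolynomial (Fin k) (ZMod 2)) ^ (a i + 1)) := by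
  have hps : p = ∑ c ∈ p.support, monomial c (coeff c p) := p.as_sum
  rw [hps]
  refine Ideal.sum_mem _ fun c hc => ?_
  obtain ⟨i, hi⟩ := hp c hc
  have h : monomial c (coeff c p) = C (coeff c p) * monomial c 1 := by
    rw [C_mul_monomial, mul_one]
  rw [h]
  exact Ideal.mul_mem_left _ _ (monomial_one_mem_span a c i hi)

end Stmt16Aux

namespace Stmt16Aux

lemma zmod2_eq_one {x : ZMod 2} (h : x ≠ 0) : x = 1 := by revert h; revert x; decide

lemma sub_tr_mem (a : Fin k → ℕ) (p : MvPolynomial (Fin k) (ZMod 2)) :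
    p - tr (Finsupp.equivFunOnFinite.symm a) p ∈
      Ideal.span (Set.range fun i => (X i : MvPolynomial (Fin k) (ZMod 2)) ^ (a i + 1)) := by
  apply mem_span_of_forall
  intro c hc
  rw [mem_support_iff, coeff_sub, coeff_tr] at hc
  by_cases h : c ≤ Finsupp.equivFunOnFinite.symm a
  · simp [h] at hc
  · rw [Finsupp.le_def] at h
    push_neg at h
    obtain ⟨i, hi⟩ := h
    exact ⟨i, by simpa using hi⟩

lemma key (a : Fin k → ℕ) (J : Ideal (MvPolynomial (Fin k) (ZMod 2)))
    (hspan : Ideal.span (Set.range fun i => (X i : MvPolynomial (Fin k) (ZMod 2)) ^ (a i + 1)) ≤ J)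
    (hA : monomial (Finsupp.equivFunOnFinite.symm a) (1 : ZMod 2) ∉ J) :
    ∀ N : ℕ, ∀ q : MvPolynomial (Fin k) (ZMod 2), q.support.card ≤ N →
      (∀ c ∈ q.support,
        c ≤ Finsupp.equivFunOnFinite.symm a ∧ c ≠ Finsupp.equivFunOnFinite.symm a) →
      monomial (Finsupp.equivFunOnFinite.symm a) (1 : ZMod 2) + q ∉ J := by
  set A := Finsupp.equivFunOnFinite.symm a with hAdef
  intro N
  induction N with
  | zero =>
    intro q hq hsupp hmem
    have hq0 : q = 0 := by
      have := Finset.card_eq_zero.mp (Nat.le_zero.mp hq)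
      simpa [MvPolynomial.support_eq_empty] using this
    rw [hq0, add_zero] at hmem
    exact hA hmem
  | succ N ih =>
    intro q hq hsupp hmem
    by_cases hq0 : q = 0
    · subst hq0; rw [add_zero] at hmem; exact hA hmem
    obtain ⟨b, hb⟩ := MvPolynomial.support_nonempty.mpr hq0
    obtain ⟨hbA, hbne⟩ := hsupp b hb
    set r := monomial (A - b) (1 : ZMod 2) * (monomial A 1 + q) with hr
    have hrJ : r ∈ J := Ideal.mul_mem_left _ _ hmem
    have hr1J : tr A r ∈ J := by
      have h' : r - tr A r ∈ J := hspan (sub_tr_mem a r)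
      have := J.sub_mem hrJ h'
      simpa using this
    have hcA : coeff A (tr A r) = 1 := by
      rw [coeff_tr, if_pos le_rfl, hr, coeff_monomial_mul', if_pos tsub_le_self, one_mul,
        tsub_tsub_cancel_of_le hbA, coeff_add, coeff_monomial, if_neg (Ne.symm hbne), zero_add]
      exact zmod2_eq_one (mem_support_iff.mp hb)
    set q' := tr A r - monomial A 1 with hq'
    have hmem' : monomial A (1 : ZMod 2) + q' ∈ J := by
      have h : monomial A (1 : ZMod 2) + q' = tr A r := by rw [hq']; ring
      rw [h]; exact hr1J
    have hq'A : coeff A q' = 0 := by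
      rw [hq', coeff_sub, hcA, coeff_monomial, if_pos rfl]; ring
    have hstep : ∀ d ∈ q'.support, (d ≤ A ∧ d ≠ A) ∧
        d ∈ (q.support.erase b).image (fun b' => (A - b) + b') := by
      intro d hd
      have hdA : d ≠ A := fun h => by rw [h] at hd; exact mem_support_iff.mp hd hq'A
      have hcd : coeff d q' ≠ 0 := mem_support_iff.mp hd
      have hcd' : coeff d (tr A r) ≠ 0 := by
        intro h
        apply hcd
        rw [hq', coeff_sub, h, coeff_monomial, if_neg (Ne.symm hdA)]; ring
      have hdle : d ≤ A := by
        by_contra h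
        exact hcd' (by rw [coeff_tr, if_neg h])
      have hcr : coeff d r ≠ 0 := by
        intro h
        exact hcd' (by rw [coeff_tr, if_pos hdle, h])
      rw [hr, coeff_monomial_mul'] at hcr
      by_cases hAb : A - b ≤ d
      swap
      · rw [if_neg hAb] at hcr; exact absurd rfl hcr
      rw [if_pos hAb, one_mul, coeff_add] at hcr
      set b' := d - (A - b) with hb'def
      have hd' : (A - b) + b' = d := by rw [hb'def, add_tsub_cancel_of_le hAb]
      have hpt : ∀ i, (A i - b i) + b' i ≤ A i := by
        intro i
        have h1 : d i ≤ A i := hdle i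
        rw [← hd'] at h1
        simpa [Finsupp.tsub_apply] using h1
      have hb'A : b' ≠ A := by
        intro h
        apply hbne
        ext i
        have h1 := hpt i
        have h2 : b i ≤ A i := hbA i
        rw [h] at h1
        omega
      have hb'le : b' ≤ b := by
        intro i
        have h1 := hpt i
        have h2 : b i ≤ A i := hbA i
        omega
      have hb'ne : b' ≠ b := by
        intro h
        apply hdA
        rw [← hd', h, tsub_add_cancel_of_le hbA]
      have hb'q : b' ∈ q.support := by
        rw [mem_support_iff]
        intro h
        apply hcr
        rw [coeff_monomial, if_neg (Ne.symm hb'A), h, add_zero]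
      refine ⟨⟨hdle, hdA⟩, ?_⟩
      rw [Finset.mem_image]
      exact ⟨b', Finset.mem_erase.mpr ⟨hb'ne, hb'q⟩, hd'⟩
    have hcard : q'.support.card ≤ N := by
      have h1 := Finset.card_le_card (fun d hd => (hstep d hd).2)
      have h2 := Finset.card_image_le (s := q.support.erase b) (f := fun b' => (A - b) + b')
      have h3 := Finset.card_erase_of_mem hb
      have h4 := Finset.card_pos.mpr ⟨b, hb⟩
      omega
    exact ih q' hcard (fun d hd => (hstep d hd).1) hmem'

end Stmt16Aux

namespace Stmt16Aux

lemma span_eq (a : Fin k → ℕ) (J : Ideal (MvPolynomial (Fin k) (ZMod 2)))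
    (hgen : ∀ i, (X i : MvPolynomial (Fin k) (ZMod 2)) ^ (a i + 1) ∈ J)
    (hA : monomial (Finsupp.equivFunOnFinite.symm a) (1 : ZMod 2) ∉ J) :
    J = Ideal.span (Set.range fun i => (X i : MvPolynomial (Fin k) (ZMod 2)) ^ (a i + 1)) := by
  set A := Finsupp.equivFunOnFinite.symm a with hAdef
  have hspan : Ideal.span (Set.range fun i =>
      (X i : MvPolynomial (Fin k) (ZMod 2)) ^ (a i + 1)) ≤ J := by
    rw [Ideal.span_le]
    rintro _ ⟨i, rfl⟩
    exact hgen i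
  refine le_antisymm ?_ hspan
  intro p hp
  have htrJ : tr A p ∈ J := by
    have h' : p - tr A p ∈ J := hspan (sub_tr_mem a p)
    have := J.sub_mem hp h'
    simpa using this
  have h0 : tr A p = 0 := by
    by_contra hne
    obtain ⟨b, hb⟩ := MvPolynomial.support_nonempty.mpr hne
    have hbA : b ≤ A := by
      by_contra h
      exact mem_support_iff.mp hb (by rw [coeff_tr, if_neg h])
    set r := monomial (A - b) (1 : ZMod 2) * tr A p with hr
    have hrJ : r ∈ J := Ideal.mul_mem_left _ _ htrJ
    have hr1J : tr A r ∈ J := by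
      have h' : r - tr A r ∈ J := hspan (sub_tr_mem a r)
      have := J.sub_mem hrJ h'
      simpa using this
    have hcA : coeff A (tr A r) = 1 := by
      rw [coeff_tr, if_pos le_rfl, hr, coeff_monomial_mul', if_pos tsub_le_self, one_mul,
        tsub_tsub_cancel_of_le hbA]
      exact zmod2_eq_one (mem_support_iff.mp hb)
    set q' := tr A r - monomial A 1 with hq'
    have hmem' : monomial A (1 : ZMod 2) + q' ∈ J := by
      have h : monomial A (1 : ZMod 2) + q' = tr A r := by rw [hq']; ring
      rw [h]; exact hr1J
    have hq'A : coeff A q' = 0 := by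
      rw [hq', coeff_sub, hcA, coeff_monomial, if_pos rfl]; ring
    have hsupp' : ∀ d ∈ q'.support, d ≤ A ∧ d ≠ A := by
      intro d hd
      have hdA : d ≠ A := fun h => by rw [h] at hd; exact mem_support_iff.mp hd hq'A
      have hcd : coeff d q' ≠ 0 := mem_support_iff.mp hd
      have hcd' : coeff d (tr A r) ≠ 0 := by
        intro h
        apply hcd
        rw [hq', coeff_sub, h, coeff_monomial, if_neg (Ne.symm hdA)]; ring
      have hdle : d ≤ A := by
        by_contra h
        exact hcd' (by rw [coeff_tr, if_neg h])
      exact ⟨hdle, hdA⟩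
    exact key a J hspan hA q'.support.card q' le_rfl hsupp' hmem'
  have h : p = p - tr A p := by rw [h0, sub_zero]
  rw [h]
  exact sub_tr_mem a p

end Stmt16Aux

theorem stmt16 (R : Type*) [CommRing R] [Algebra (ZMod 2) R]
    -- the augmentation `ε : R → F_2`:
    (ε : R →+* ZMod 2)
    (k : ℕ) (hk : 1 ≤ k) (n : Fin k → ℕ) (c : Fin k → ℕ → R)
    (g : Fin k → MvPolynomial (Fin k) R)
    -- `g_i = Σ_{s=0}^{n_i} c_{i,s} x_i^s`:
    (hg : ∀ i, g i = ∑ s ∈ Finset.range (n i + 1), C (c i s) * X i ^ s)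
    -- the leading coefficient is `1`:
    (hlead : ∀ i, c i (n i) = 1)
    -- the lower coefficients have positive augmentation:
    (haug : ∀ i s, s < n i → ε (c i s) = 0)
    (a : Fin k → ℕ)
    (h1 : (∏ i, (X i : MvPolynomial (Fin k) R) ^ a i) ∉ Ideal.span (Set.range g))
    (h2 : ∀ i, (X i : MvPolynomial (Fin k) R) ^ (a i + 1) ∈ Ideal.span (Set.range g)) :
    RingHom.ker
        ((Ideal.Quotient.mk (Ideal.span (Set.range g))).comp
          (MvPolynomial.map (algebraMap (ZMod 2) R))) =
      Ideal.span (Set.range fun i =>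
        (X i : MvPolynomial (Fin k) (ZMod 2)) ^ (a i + 1)) := by
  apply Stmt16Aux.span_eq
  · intro i
    rw [RingHom.mem_ker, RingHom.comp_apply, map_pow, MvPolynomial.map_X,
      Ideal.Quotient.eq_zero_iff_mem]
    exact h2 i
  · intro hmem
    apply h1
    rw [RingHom.mem_ker, RingHom.comp_apply, MvPolynomial.map_monomial, map_one,
      Ideal.Quotient.eq_zero_iff_mem] at hmem
    have hmono : (∏ i, (X i : MvPolynomial (Fin k) R) ^ a i) =
        monomial (Finsupp.equivFunOnFinite.symm a) (1 : R) := by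
      rw [← prod_X_pow_eq_monomial]
      refine (Finset.prod_subset (Finset.subset_univ _) ?_).symm
      intro x _ hx
      have hx0 : a x = 0 := by simpa using Finsupp.notMem_support_iff.mp hx
      rw [hx0, pow_zero]
    rwa [hmono]
end
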